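/- arXiv:2110.14716 — 2 statements merged into one kernel-verified Lean document; each statement's English description precedes it below -/
import Mathlib

section
/- For every s ∈ S, there exists a ∈ S such that a • s = a. -/
/-- `S` is the set consisting of 1 and all odd prime numbers. -/
def S : Set ℕ := {n | n = 1 ∨ (Nat.Prime n ∧ Odd n)}

/-- `N x` is the smallest element of `S` strictly greater than `x`. -/
noncomputable def N (x : ℕ) : ℕ := sInf {s | s ∈ S ∧ x < s}

/-- `op a b = N (|a - b|)`, where `Nat.dist` is the absolute value of the
integer difference. -/
noncomputable def op (a b : ℕ) : ℕ := N (Nat.dist a b)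

lemma S_unbounded (x : ℕ) : ∃ p, p ∈ S ∧ x < p := by
  obtain ⟨p, hp, hpp⟩ := Nat.exists_infinite_primes (max x 2 + 1)
  refine ⟨p, Or.inr ⟨hpp, hpp.odd_of_ne_two ?_⟩, ?_⟩
  · rintro rfl; omega
  · omega

lemma N_mem (x : ℕ) : N x ∈ S ∧ x < N x :=
  Nat.sInf_mem (S_unbounded x)

lemma N_le {x y : ℕ} (hy : y ∈ S) (hxy : x < y) : N x ≤ y :=
  Nat.sInf_le ⟨hy, hxy⟩

theorem exists_fixed : ∀ s ∈ S, ∃ a ∈ S, op a s = a := by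
  intro s hs
  have hs1 : 1 ≤ s := by
    rcases hs with h | ⟨h, _⟩
    · omega
    · exact h.one_lt.le
  set m := Nat.factorial (s + 1) + 1 + s with hm
  obtain ⟨hbS, hmb⟩ := N_mem m
  set b := N m with hb
  have hfac : 2 ≤ Nat.factorial (s + 1) := by
    have := Nat.factorial_le (show 2 ≤ s + 1 by omega)
    simpa [Nat.factorial] using this
  refine ⟨b, hbS, ?_⟩
  have hsb : s ≤ b := by omega
  have hdist : Nat.dist b s = b - s := by
    rw [Nat.dist_comm, Nat.dist_eq_sub_of_le hsb]
  rw [op, hdist]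
  obtain ⟨hyS, hy⟩ := N_mem (b - s)
  refine le_antisymm (N_le hbS (by omega)) ?_
  by_contra h
  push_neg at h
  set y := N (b - s) with hysdef
  have hym : y ≤ m := by
    by_contra h2
    push_neg at h2
    exact absurd (N_le hyS h2) (by omega)
  -- y lies in ((s+1)!+1, (s+1)!+1+s], so y = (s+1)! + k with 2 ≤ k ≤ s+1
  set k := y - Nat.factorial (s + 1) with hk
  have hk2 : 2 ≤ k := by omega
  have hks : k ≤ s + 1 := by omega
  have hyk : y = Nat.factorial (s + 1) + k := by omega
  have hdvd : k ∣ y := by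
    rw [hyk]
    exact Nat.dvd_add (Nat.dvd_factorial (by omega) hks) dvd_rfl
  rcases hyS with h1 | ⟨hp, _⟩
  · omega
  · have := hp.eq_one_or_self_of_dvd k hdvd
    omega
end

section
/- There do not exist pairwise distinct elements a, b, c ∈ S such that a • b = b • c = a • c. -/
lemma S_odd {s : ℕ} (hs : s ∈ S) : Odd s := by
  rcases hs with h | ⟨_, h⟩
  · simp [h]
  · exact h

lemma N_set_nonempty (x : ℕ) : {s | s ∈ S ∧ x < s}.Nonempty := by
  obtain ⟨q, hq, hqp⟩ := Nat.exists_infinite_primes (max (x + 1) 3)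
  refine ⟨q, Or.inr ⟨hqp, hqp.odd_of_ne_two ?_⟩, ?_⟩
  · omega
  · omega

lemma N_gt (x : ℕ) : x < N x := (Nat.sInf_mem (N_set_nonempty x)).2

lemma N_le_s6 {x q : ℕ} (hq : q ∈ S) (h : x < q) : N x ≤ q := Nat.sInf_le ⟨hq, h⟩

lemma op_comm (a b : ℕ) : op a b = op b a := by
  unfold op; rw [Nat.dist_comm]

lemma dist_ge_two {a b : ℕ} (ha : a ∈ S) (hb : b ∈ S) (hab : a < b) :
    2 ≤ b - a := by
  have he : Even (b - a) := Nat.Odd.sub_odd (S_odd hb) (S_odd ha)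
  obtain ⟨k, hk⟩ := he
  omega

lemma core {a b c : ℕ} (ha : a ∈ S) (hb : b ∈ S) (hc : c ∈ S)
    (hab : a < b) (hbc : b < c)
    (h1 : op a b = op b c) (h2 : op a b = op a c) : False := by
  set d1 := b - a with hd1
  set d2 := c - b with hd2
  have hda : Nat.dist a b = d1 := Nat.dist_eq_sub_of_le hab.le
  have hdb : Nat.dist b c = d2 := Nat.dist_eq_sub_of_le hbc.le
  have hdc : Nat.dist a c = d1 + d2 := by
    rw [Nat.dist_eq_sub_of_le (hab.trans hbc).le]; omega
  have h1' : N d1 = N d2 := by simpa [op, hda, hdb] using h1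
  have h2' : N d1 = N (d1 + d2) := by simpa [op, hda, hdc] using h2
  have hge1 : 2 ≤ d1 := dist_ge_two ha hb hab
  have hge2 : 2 ≤ d2 := dist_ge_two hb hc hbc
  -- let d be the min of d1, d2
  set d := min d1 d2 with hd
  have hNd : N d = N (d1 + d2) := by
    rcases min_choice d1 d2 with h | h <;> rw [hd, h]
    · exact h2'
    · rw [← h1']; exact h2'
  have hbig : 2 * d < N d := by
    have := N_gt (d1 + d2)
    omega
  -- Bertrand: an odd prime q with d < q ≤ 2d
  obtain ⟨q, hqp, hlt, hle⟩ := Nat.exists_prime_lt_and_le_two_mul d (by omega)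
  have hqS : q ∈ S := Or.inr ⟨hqp, hqp.odd_of_ne_two (by omega)⟩
  have := N_le_s6 hqS hlt
  omega

theorem no_equilateral_triangle :
    ¬ ∃ a ∈ S, ∃ b ∈ S, ∃ c ∈ S, a ≠ b ∧ b ≠ c ∧ a ≠ c ∧
      op a b = op b c ∧ op b c = op a c := by
  rintro ⟨a, ha, b, hb, c, hc, hab, hbc, hac, e1, e2⟩
  -- op a b = op b c, op b c = op a c; all three equal
  rcases lt_trichotomy a b with h1 | h1 | h1
  · rcases lt_trichotomy b c with h2 | h2 | h2
    · exact core ha hb hc h1 h2 e1 (e1.trans e2)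
    · exact hbc h2
    · rcases lt_trichotomy a c with h3 | h3 | h3
      · -- a < c < b
        exact core ha hc hb h3 h2 (by rw [op_comm c b, ← e2]) (by rw [← e2, ← e1])
      · exact hac h3
      · -- c < a < b
        exact core hc ha hb h3 h1 (by rw [op_comm c a, ← e2, ← e1])
          (by rw [op_comm c a, op_comm c b]; exact e2.symm)
  · exact hab h1
  · rcases lt_trichotomy b c with h2 | h2 | h2
    · rcases lt_trichotomy a c with h3 | h3 | h3
      · -- b < a < c
        exact core hb ha hc h1 h3 (by rw [op_comm b a, e1, e2]) (by rw [op_comm b a, e1])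
      · exact hac h3
      · -- b < c < a
        exact core hb hc ha h2 h3 (by rw [e2, op_comm a c]) (by rw [op_comm b a, ← e1])
    · exact hbc h2
    · -- c < b < a
      exact core hc hb ha h2 h1 (by rw [op_comm c b, op_comm b a, e1])
        (by rw [op_comm c b, op_comm c a, ← e2])
end
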